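/- arXiv:2312.02393 — 7 statements merged into one kernel-verified Lean document; each statement's English description precedes it below -/
import Mathlib

section
/- Let f ∈ L¹(ℝ²) and g ∈ L∞(ℝ × [0,π)). Then (Bg) * f = B(g * Rf), where on the left * denotes convolution on ℝ² and on the right * denotes convolution in the first (radial) variable for each fixed angle. -/
/-!
Fix an angle `θ`, let `ω = (cos θ, sin θ)` and `t = ⟨(x, y), ω⟩`. The chart
`(S, s) ↦ (t - S) ω + s ω^⊥` preserves Lebesgue measure and turns `⟨(x, y) - p, ω⟩` into `S`, so
`∫ g(⟨(x, y) - p, ω⟩, θ) f(p) dp = ∫ g(S, θ) (Rf)(t - S, θ) dS`. Averaging over `θ` and swapping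
the `p`- and `θ`-integrals gives the identity. Fubini applies because `f ∈ L¹` and
`(p, θ) ↦ g(⟨(x, y) - p, ω⟩, θ)` is still in `L∞`: the map `(p, θ) ↦ (⟨(x, y) - p, ω⟩, θ)` is
quasi-measure-preserving, since after the chart in each fibre it is a coordinate projection.
-/

open MeasureTheory Measure Real

theorem MeasureTheory.MemLp.comp_quasiMeasurePreserving_top {α β E : Type*}
    [MeasurableSpace α] [MeasurableSpace β] [NormedAddCommGroup E] {μ : Measure α}
    {ν : Measure β} {g : α → E} {φ : β → α}
    (hg : MemLp g ⊤ μ) (hφ : QuasiMeasurePreserving φ ν μ) : MemLp (g ∘ φ) ⊤ ν := by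
  refine ⟨hg.1.comp_quasiMeasurePreserving hφ, ?_⟩
  have hg_lt := hg.2
  rw [eLpNorm_exponent_top] at hg_lt ⊢
  exact (eLpNormEssSup_le_of_ae_enorm_bound (hφ.ae ae_le_eLpNormEssSup)).trans_lt hg_lt

namespace Radon

noncomputable def radonChart (t θ : ℝ) : (ℝ × ℝ) ≃ᵐ (ℝ × ℝ) :=
  (MeasurableEquiv.prodCongr (Homeomorph.subLeft t).toMeasurableEquiv
      (MeasurableEquiv.refl ℝ)).trans
    (Complex.measurableEquivRealProd.symm.trans
      ((rotation (Circle.exp θ)).toMeasurableEquiv.trans Complex.measurableEquivRealProd))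

theorem radonChart_apply (t θ : ℝ) (w : ℝ × ℝ) :
    radonChart t θ w = ((t - w.1) * cos θ - w.2 * sin θ, (t - w.1) * sin θ + w.2 * cos θ) := by
  change Complex.measurableEquivRealProd
    (rotation (Circle.exp θ) (Complex.measurableEquivRealProd.symm (t - w.1, w.2))) = _
  rw [Complex.measurableEquivRealProd_symm_apply, rotation_apply, Circle.coe_exp,
    Complex.exp_mul_I, Complex.measurableEquivRealProd_apply]
  simp only [Complex.mul_re, Complex.add_re, Complex.cos_ofReal_re, Complex.sin_ofReal_re,
    Complex.I_re, mul_zero, Complex.sin_ofReal_im, Complex.I_im, mul_one, sub_self, add_zero,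
    Complex.add_im, Complex.cos_ofReal_im, Complex.mul_im, zero_add, Prod.ext_iff]
  constructor <;> ring

theorem measurePreserving_radonChart (t θ : ℝ) :
    MeasurePreserving (radonChart t θ) volume volume := by
  have hsub : MeasurePreserving (MeasurableEquiv.prodCongr (Homeomorph.subLeft t).toMeasurableEquiv
      (MeasurableEquiv.refl ℝ)) (volume : Measure (ℝ × ℝ)) volume := by
    rw [volume_eq_prod]
    exact (measurePreserving_sub_left volume t).prod (MeasurePreserving.id volume)
  exact (Complex.volume_preserving_equiv_real_prod.comp
    ((rotation (Circle.exp θ)).measurePreserving.comp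
      Complex.volume_preserving_equiv_real_prod.symm)).comp hsub

theorem radial_radonChart (x y θ : ℝ) (w : ℝ × ℝ) :
    (x - (radonChart (x * cos θ + y * sin θ) θ w).1) * cos θ
      + (y - (radonChart (x * cos θ + y * sin θ) θ w).2) * sin θ = w.1 := by
  rw [radonChart_apply]
  linear_combination (w.1 - (x * cos θ + y * sin θ)) * sin_sq_add_cos_sq θ

theorem integral_comp_radial_mul (f : ℝ × ℝ → ℝ) (h : ℝ → ℝ) (x y θ : ℝ)
    (hint : Integrable fun p : ℝ × ℝ => h ((x - p.1) * cos θ + (y - p.2) * sin θ) * f p) :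
    ∫ p : ℝ × ℝ, h ((x - p.1) * cos θ + (y - p.2) * sin θ) * f p =
      ∫ S : ℝ, h S * ∫ s : ℝ, f ((x * cos θ + y * sin θ - S) * cos θ - s * sin θ,
        (x * cos θ + y * sin θ - S) * sin θ + s * cos θ) := by
  set T := radonChart (x * cos θ + y * sin θ) θ
  have hT : MeasurePreserving T volume volume := measurePreserving_radonChart _ θ
  have hint' : Integrable (fun w : ℝ × ℝ => h w.1 * f (T w)) (volume.prod volume) := by
    rw [← volume_eq_prod]
    have := (hT.integrable_comp_emb T.measurableEmbedding).2 hint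
    simpa only [Function.comp_def, T, radial_radonChart] using this
  have hcomp : ∀ w, h ((x - (T w).1) * cos θ + (y - (T w).2) * sin θ) * f (T w) =
      h w.1 * f (T w) := fun w => by rw [radial_radonChart]
  rw [← hT.integral_comp', funext hcomp, volume_eq_prod, integral_prod _ hint']
  simp only [integral_const_mul, T, radonChart_apply]

theorem quasiMeasurePreserving_radial (x y : ℝ) (ν : Measure ℝ) [SFinite ν] :
    QuasiMeasurePreserving
      (fun z : ℝ × (ℝ × ℝ) => ((x - z.2.1) * cos z.1 + (y - z.2.2) * sin z.1, z.1))
      (ν.prod volume) (volume.prod ν) := by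
  have hΦ : Measurable
      (fun z : ℝ × (ℝ × ℝ) => ((x - z.2.1) * cos z.1 + (y - z.2.2) * sin z.1, z.1)) := by
    fun_prop
  have hΨ : MeasurePreserving
      (fun z : ℝ × (ℝ × ℝ) => (z.1, radonChart (x * cos z.1 + y * sin z.1) z.1 z.2))
      (ν.prod volume) (ν.prod volume) := by
    have hmeas : Measurable (Function.uncurry fun θ (w : ℝ × ℝ) =>
        radonChart (x * cos θ + y * sin θ) θ w) := by
      simp only [Function.uncurry_def, radonChart_apply]
      fun_prop
    exact (MeasurePreserving.id ν).skew_product hmeas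
      (ae_of_all _ fun θ => (measurePreserving_radonChart _ θ).map_eq)
  have hG : QuasiMeasurePreserving (fun z : ℝ × (ℝ × ℝ) => (z.2.1, z.1))
      (ν.prod volume) (volume.prod ν) := by
    rw [volume_eq_prod (α := ℝ) (β := ℝ)]
    exact (measurePreserving_swap.quasiMeasurePreserving).comp
      (MeasureTheory.QuasiMeasurePreserving.prodMap (QuasiMeasurePreserving.id ν)
        quasiMeasurePreserving_fst)
  -- the map composed with the fibrewise chart `hΨ` is the projection `hG`
  refine ⟨hΦ, ?_⟩
  rw [← hΨ.map_eq, map_map hΦ hΨ.measurable]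
  convert hG.absolutelyContinuous using 2
  ext z : 1
  simp only [Function.comp_apply, radial_radonChart]

theorem integrable_comp_radial_mul (x y : ℝ) (ν : Measure ℝ) [IsFiniteMeasure ν]
    {f g : ℝ × ℝ → ℝ} (hf : Integrable f) (hg : MemLp g ⊤ (volume.prod ν)) :
    Integrable
      (fun z : ℝ × (ℝ × ℝ) => g ((x - z.2.1) * cos z.1 + (y - z.2.2) * sin z.1, z.1) * f z.2)
      (ν.prod volume) :=
  (hf.comp_snd ν).mul_of_top_right
    (MemLp.comp_quasiMeasurePreserving_top hg (quasiMeasurePreserving_radial x y ν))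

end Radon

open Radon

/-- For `f ∈ L¹(ℝ²)` and `g ∈ L∞(ℝ × [0,π))`, one has `(Bg) * f = B(g * Rf)`, where on the
left `*` is convolution on `ℝ²` and on the right `*` is convolution in the radial variable
for each fixed angle. -/
theorem statement10 (f g : ℝ × ℝ → ℝ) (hf : Integrable f)
    (hg : MemLp g ⊤ (volume.restrict (Set.univ ×ˢ Set.Ico 0 Real.pi))) :
    ∀ x y : ℝ,
      (∫ p : ℝ × ℝ,
          ((1 / Real.pi) * ∫ θ in Set.Ico 0 Real.pi,
            g ((x - p.1) * Real.cos θ + (y - p.2) * Real.sin θ, θ)) * f p) =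
        (1 / Real.pi) * ∫ θ in Set.Ico 0 Real.pi,
          ∫ S : ℝ, g (S, θ) *
            ∫ s : ℝ, f ((x * Real.cos θ + y * Real.sin θ - S) * Real.cos θ - s * Real.sin θ,
              (x * Real.cos θ + y * Real.sin θ - S) * Real.sin θ + s * Real.cos θ) := by
  intro x y
  rw [volume_eq_prod, ← prod_restrict, restrict_univ] at hg
  have hint := integrable_comp_radial_mul x y _ hf hg
  calc _ = 1 / π * ∫ p : ℝ × ℝ, ∫ θ in Set.Ico 0 π,
          g ((x - p.1) * cos θ + (y - p.2) * sin θ, θ) * f p := by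
        rw [← integral_const_mul]
        refine integral_congr_ae (ae_of_all _ fun p => ?_)
        simp only [integral_mul_const]
        ring
    _ = 1 / π * ∫ θ in Set.Ico 0 π, ∫ p : ℝ × ℝ,
          g ((x - p.1) * cos θ + (y - p.2) * sin θ, θ) * f p := by
        rw [integral_integral_swap (f := fun θ (p : ℝ × ℝ) =>
          g ((x - p.1) * cos θ + (y - p.2) * sin θ, θ) * f p) hint]
    _ = _ := by
      congr 1
      exact integral_congr_ae (hint.prod_right_ae.mono fun θ hθ =>
        integral_comp_radial_mul f (fun S => g (S, θ)) x y θ hθ)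
end

section
/- Fourier slice theorem in two dimensions: for f ∈ L¹(ℝ²), the one-dimensional Fourier transform of the Radon transform in the radial variable satisfies F(Rf)(S,θ) = Ff(S·cos θ, S·sin θ) for all (S,θ) ∈ ℝ × [0,π), where Ff is the two-dimensional Fourier transform of f. -/
open MeasureTheory Real

/-! Substitute `x = R_θ p` with `R_θ` the rotation by `θ`: it preserves Lebesgue measure, and
the phase `⟪R_θ p, (S cos θ, S sin θ)⟫` equals `S p.1`. After this change of variables the phase
depends only on the first coordinate, so Fubini's theorem integrates out the second one, which
is exactly the line integral defining the Radon transform. -/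

section ChangeOfVariables

variable {E F : Type*} [NormedAddCommGroup E] [NormedSpace ℝ E] [MeasurableSpace E] [BorelSpace E]
  [FiniteDimensional ℝ E] [NormedAddCommGroup F] [NormedSpace ℝ F]
  (μ : Measure E) [μ.IsAddHaarMeasure] {L : E →ₗ[ℝ] E}

theorem LinearMap.measurePreserving_of_abs_det_eq_one (hL : |LinearMap.det L| = 1) :
    MeasurePreserving L μ μ := by
  have hdet : LinearMap.det L ≠ 0 := by
    intro h
    simp [h] at hL
  refine ⟨L.continuous_of_finiteDimensional.measurable, ?_⟩
  rw [Measure.map_linearMap_addHaar_eq_smul_addHaar μ hdet, abs_inv, hL]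
  simp

theorem LinearMap.measurableEmbedding_of_det_ne_zero (hL : LinearMap.det L ≠ 0) :
    MeasurableEmbedding L :=
  L.continuous_of_finiteDimensional.measurableEmbedding
    ((Module.End.isUnit_iff L).mp (L.isUnit_iff_isUnit_det.mpr (Ne.isUnit hL))).injective

theorem LinearMap.integral_comp_of_abs_det_eq_one (hL : |LinearMap.det L| = 1) (g : E → F) :
    ∫ x, g (L x) ∂μ = ∫ x, g x ∂μ :=
  (L.measurePreserving_of_abs_det_eq_one μ hL).integral_comp
    (L.measurableEmbedding_of_det_ne_zero fun h => by simp [h] at hL) g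

end ChangeOfVariables

theorem integral_ofReal_mul_comp_fst {α β : Type*} [MeasurableSpace α] [MeasurableSpace β]
    {μ : Measure α} {ν : Measure β} [SFinite μ] [SFinite ν] {g : α × β → ℝ}
    (hg : Integrable g (μ.prod ν)) {φ : α → ℂ} (hφ : AEStronglyMeasurable φ μ) {C : ℝ}
    (hφC : ∀ a, ‖φ a‖ ≤ C) :
    ∫ x, (g x : ℂ) * φ x.1 ∂μ.prod ν = ∫ a, ((∫ b, g (a, b) ∂ν : ℝ) : ℂ) * φ a ∂μ := by
  have hint : Integrable (fun x => (g x : ℂ) * φ x.1) (μ.prod ν) :=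
    hg.ofReal.mul_bdd hφ.comp_fst (Filter.Eventually.of_forall fun x => hφC x.1)
  rw [integral_prod _ hint]
  simp only [integral_mul_const, integral_complex_ofReal]

noncomputable def rotationProd (θ : ℝ) : ℝ × ℝ →ₗ[ℝ] ℝ × ℝ :=
  Matrix.toLin (Module.Basis.finTwoProd ℝ) (Module.Basis.finTwoProd ℝ)
    !![cos θ, -sin θ; sin θ, cos θ]

theorem rotationProd_apply (θ : ℝ) (p : ℝ × ℝ) :
    rotationProd θ p = (p.1 * cos θ - p.2 * sin θ, p.1 * sin θ + p.2 * cos θ) := by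
  rw [rotationProd, Matrix.toLin_finTwoProd_apply]
  ext <;> simp only <;> ring

theorem det_rotationProd (θ : ℝ) : LinearMap.det (rotationProd θ) = 1 := by
  rw [rotationProd, LinearMap.det_toLin, Matrix.det_fin_two_of]
  linear_combination sin_sq_add_cos_sq θ

theorem rotationProd_fst_mul_add_snd_mul (θ S : ℝ) (p : ℝ × ℝ) :
    (rotationProd θ p).1 * (S * cos θ) + (rotationProd θ p).2 * (S * sin θ) = S * p.1 := by
  rw [rotationProd_apply]
  linear_combination S * p.1 * sin_sq_add_cos_sq θ

theorem statement11_general (f : ℝ × ℝ → ℝ) (hf : Integrable f)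
    (S θ : ℝ) :
    (∫ t : ℝ,
        (↑(∫ s : ℝ, f (t * Real.cos θ - s * Real.sin θ, t * Real.sin θ + s * Real.cos θ)) : ℂ) *
          Complex.exp (-Complex.I * (S * t))) =
      ∫ p : ℝ × ℝ, (f p : ℂ) *
        Complex.exp (-Complex.I * (p.1 * (S * Real.cos θ) + p.2 * (S * Real.sin θ))) := by
  have hdet : |LinearMap.det (rotationProd θ)| = 1 := by simp [det_rotationProd]
  have hfR : Integrable (fun p => f (rotationProd θ p)) :=
    ((rotationProd θ).measurePreserving_of_abs_det_eq_one volume hdet).integrable_comp_of_integrable hf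
  have hphase : AEStronglyMeasurable (fun t : ℝ => Complex.exp (-Complex.I * (S * t))) volume :=
    (by fun_prop : Continuous fun t : ℝ => Complex.exp (-Complex.I * (S * t))).aestronglyMeasurable
  have hphase_le : ∀ t : ℝ, ‖Complex.exp (-Complex.I * (S * t))‖ ≤ 1 := fun t => by
    rw [Complex.norm_exp]
    simp
  calc _ = ∫ p : ℝ × ℝ, (f (rotationProd θ p) : ℂ) * Complex.exp (-Complex.I * (S * p.1)) := by
        rw [Measure.volume_eq_prod, integral_ofReal_mul_comp_fst hfR hphase hphase_le]
        simp only [rotationProd_apply]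
    _ = ∫ p : ℝ × ℝ, (f (rotationProd θ p) : ℂ) * Complex.exp (-Complex.I *
          ((rotationProd θ p).1 * (S * cos θ) + (rotationProd θ p).2 * (S * sin θ))) := by
        congr with p
        rw_mod_cast [rotationProd_fst_mul_add_snd_mul]
    _ = _ := (rotationProd θ).integral_comp_of_abs_det_eq_one volume hdet
        fun p => (f p : ℂ) * Complex.exp (-Complex.I * (p.1 * (S * cos θ) + p.2 * (S * sin θ)))

/-- Fourier slice theorem in two dimensions: for `f ∈ L¹(ℝ²)`,
`F(Rf)(S,θ) = Ff(S·cos θ, S·sin θ)` for all `(S,θ) ∈ ℝ × [0,π)`, where `F` on the left is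
the one-dimensional Fourier transform in the radial variable and `Ff` is the
two-dimensional Fourier transform of `f`. -/
theorem statement11 (f : ℝ × ℝ → ℝ) (hf : Integrable f)
    (S θ : ℝ) (hθ : θ ∈ Set.Ico 0 Real.pi) :
    (∫ t : ℝ,
        (↑(∫ s : ℝ, f (t * Real.cos θ - s * Real.sin θ, t * Real.sin θ + s * Real.cos θ)) : ℂ) *
          Complex.exp (-Complex.I * (S * t))) =
      ∫ p : ℝ × ℝ, (f p : ℂ) *
        Complex.exp (-Complex.I * (p.1 * (S * Real.cos θ) + p.2 * (S * Real.sin θ))) :=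
  statement11_general f hf S θ
end

section
/- Filtered back projection formula: for f ∈ L¹(ℝ²) continuous with Ff ∈ L¹(ℝ²), one has f(x,y) = (1/(4π²)) ∫₀^π ∫_ℝ F(Rf)(S,θ) · |S| · e^{iS(x·cos θ + y·sin θ)} dS dθ for all (x,y) ∈ ℝ². -/
/-!
Rotating coordinates by `θ` and applying Fubini gives the Fourier slice theorem: the
one-dimensional Fourier transform of the projection `Rf(·, θ)` is the restriction of `Ff` to the
line `S ↦ (S cos θ, S sin θ)`. The two-dimensional Fourier inversion formula (Mathlib's, transported
from `ℂ` and rescaled by `2π`), written in the signed polar coordinates `(S, θ) ∈ ℝ × [0, π)`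
whose Jacobian is `|S|`, is then exactly the filtered back projection formula.
-/

open MeasureTheory Real Set
open Complex (I)
open FourierTransform

/-- Unlike Mathlib's `𝓕`, the exponent carries no factor `2π`. -/
noncomputable def fourier₁ (h : ℝ → ℂ) (S : ℝ) : ℂ := ∫ t, h t * Complex.exp (-I * (S * t))

noncomputable def fourier₂ (g : ℝ × ℝ → ℂ) (w : ℝ × ℝ) : ℂ :=
  ∫ p, g p * Complex.exp (-I * (p.1 * w.1 + p.2 * w.2))

noncomputable def radon (g : ℝ × ℝ → ℂ) (θ t : ℝ) : ℂ :=
  ∫ s, g (t * cos θ - s * sin θ, t * sin θ + s * cos θ)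

noncomputable def planeRotation (θ : ℝ) : (ℝ × ℝ) ≃ᵐ (ℝ × ℝ) :=
  (Complex.measurableEquivRealProd.symm.trans
    (rotation (Circle.exp θ)).toMeasurableEquiv).trans Complex.measurableEquivRealProd

theorem planeRotation_apply (θ : ℝ) (q : ℝ × ℝ) :
    planeRotation θ q = (q.1 * cos θ - q.2 * sin θ, q.1 * sin θ + q.2 * cos θ) := by
  simp only [planeRotation, MeasurableEquiv.trans_apply, Complex.measurableEquivRealProd_symm_apply,
    LinearIsometryEquiv.coe_toMeasurableEquiv, rotation_apply, Circle.coe_exp, Complex.exp_mul_I,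
    Complex.measurableEquivRealProd_apply, Complex.mul_re, Complex.add_re, Complex.cos_ofReal_re,
    Complex.sin_ofReal_re, Complex.I_re, mul_zero, Complex.sin_ofReal_im, Complex.I_im, mul_one,
    sub_self, add_zero, Complex.add_im, Complex.cos_ofReal_im, Complex.mul_im, zero_add, Prod.mk.injEq]
  constructor <;> ring

theorem measurePreserving_planeRotation (θ : ℝ) :
    MeasurePreserving (planeRotation θ) volume volume :=
  (Complex.volume_preserving_equiv_real_prod.comp
    (rotation (Circle.exp θ)).measurePreserving).comp
      Complex.volume_preserving_equiv_real_prod.symm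

theorem MeasureTheory.Integrable.mul_cexp {α : Type*} [MeasurableSpace α] {μ : Measure α}
    {F φ : α → ℂ} (hF : Integrable F μ) (hφ : Measurable φ) (hre : ∀ a, (φ a).re = 0) :
    Integrable (fun a => F a * Complex.exp (φ a)) μ :=
  hF.mul_bdd (c := 1) (Complex.measurable_exp.comp hφ).aestronglyMeasurable
    (ae_of_all _ fun a => by rw [Complex.norm_exp, hre, Real.exp_zero])

theorem fourier₁_radon {g : ℝ × ℝ → ℂ} (hg : Integrable g) (θ S : ℝ) :
    fourier₁ (radon g θ) S = fourier₂ g (S * cos θ, S * sin θ) := by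
  set w : ℝ × ℝ := (S * cos θ, S * sin θ)
  set Φ := fun p : ℝ × ℝ => g p * Complex.exp (-I * (p.1 * w.1 + p.2 * w.2))
  have hΦ : Integrable Φ := hg.mul_cexp (by fun_prop) (by simp)
  have hrot := measurePreserving_planeRotation θ
  have hΦrot (q : ℝ × ℝ) :
      Φ (planeRotation θ q) = g (planeRotation θ q) * Complex.exp (-I * (S * q.1)) := by
    have : (q.1 * cos θ - q.2 * sin θ) * (S * cos θ) + (q.1 * sin θ + q.2 * cos θ) * (S * sin θ)
        = S * q.1 := by linear_combination S * q.1 * sin_sq_add_cos_sq θ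
    simp only [Φ, w, planeRotation_apply]
    exact_mod_cast congr(g _ * Complex.exp (-I * ($this : ℂ)))
  have hint : Integrable fun q : ℝ × ℝ => g (planeRotation θ q) * Complex.exp (-I * (S * q.1)) :=
    ((hrot.integrable_comp_emb (planeRotation θ).measurableEmbedding).2
      hΦ).congr (ae_of_all _ hΦrot)
  calc fourier₁ (radon g θ) S
      = ∫ q : ℝ × ℝ, g (planeRotation θ q) * Complex.exp (-I * (S * q.1)) := by
        rw [Measure.volume_eq_prod, integral_prod _ hint]
        simp only [fourier₁, radon, planeRotation_apply, integral_mul_const]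
    _ = ∫ q, Φ (planeRotation θ q) := by simp only [hΦrot]
    _ = fourier₂ g w := hrot.integral_comp' Φ

theorem fourier_comp_measurableEquivRealProd (g : ℝ × ℝ → ℂ) (ξ : ℂ) :
    𝓕 (g ∘ Complex.measurableEquivRealProd) ξ =
      fourier₂ g ((2 * π) • Complex.measurableEquivRealProd ξ) := by
  rw [Real.fourier_eq', ← Complex.volume_preserving_equiv_real_prod.symm.integral_comp']
  congr 1
  ext p
  simp only [neg_mul, Complex.measurableEquivRealProd_symm_apply, Complex.inner, Complex.mul_re,
    Complex.conj_re, Complex.conj_im, mul_neg, sub_neg_eq_add, Complex.ofReal_neg, Complex.ofReal_mul,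
    Complex.ofReal_ofNat, Complex.ofReal_add, Function.comp_apply, Complex.measurableEquivRealProd_apply,
    Prod.mk.eta, smul_eq_mul, Prod.smul_mk]
  ring

theorem fourier₂_inversion {g : ℝ × ℝ → ℂ} (hg : Integrable g) (hc : Continuous g)
    (hF : Integrable (fourier₂ g)) (v : ℝ × ℝ) :
    g v = (((4 * π ^ 2)⁻¹ : ℝ) : ℂ) *
      ∫ w, fourier₂ g w * Complex.exp (I * (v.1 * w.1 + v.2 * w.2)) := by
  set e := Complex.measurableEquivRealProd
  have he : MeasurePreserving e := Complex.volume_preserving_equiv_real_prod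
  have h2π : 2 * π ≠ 0 := by positivity
  have hFe : 𝓕 (g ∘ e) = fun ξ => fourier₂ g ((2 * π) • e ξ) :=
    funext (fourier_comp_measurableEquivRealProd g)
  have hint : Integrable (g ∘ e) := (he.integrable_comp_emb e.measurableEmbedding).2 hg
  have hFint : Integrable (𝓕 (g ∘ e)) := by
    rw [hFe]
    exact (he.integrable_comp_emb e.measurableEmbedding).2
      ((integrable_comp_smul_iff volume _ h2π).2 hF)
  set K : ℝ × ℝ → ℂ := fun w => fourier₂ g w * Complex.exp (I * (v.1 * w.1 + v.2 * w.2))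
  calc g v = 𝓕⁻ (𝓕 (g ∘ e)) (e.symm v) := by
        rw [hint.fourierInv_fourier_eq hFint
          (hc.comp (Complex.continuous_re.prodMk Complex.continuous_im)).continuousAt]
        simp
    _ = ∫ p : ℝ × ℝ, K ((2 * π) • p) := by
        rw [Real.fourierInv_eq', hFe, ← he.symm.integral_comp']
        congr 1
        ext p
        simp only [K, smul_eq_mul, MeasurableEquiv.apply_symm_apply, mul_comm (Complex.exp _)]
        congr 2
        simp only [e, Complex.measurableEquivRealProd_symm_apply, Complex.inner, Complex.mul_re,
          Complex.conj_re, Complex.conj_im, mul_neg, sub_neg_eq_add, Complex.ofReal_mul,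
          Complex.ofReal_ofNat, Complex.ofReal_add, Prod.smul_fst, smul_eq_mul, Prod.smul_snd]
        ring
    _ = (((4 * π ^ 2)⁻¹ : ℝ) : ℂ) * ∫ w, K w := by
        rw [Measure.integral_comp_smul volume K (2 * π), Module.finrank_prod, Module.finrank_self,
          abs_of_pos (by positivity), Complex.real_smul]
        congr 2
        ring

theorem injOn_polarCoord_symm_halfTurn : InjOn polarCoord.symm (({0}ᶜ : Set ℝ) ×ˢ Ico 0 π) := by
  rintro ⟨S₁, θ₁⟩ ⟨hS₁, hθ₁⟩ ⟨S₂, θ₂⟩ ⟨-, hθ₂⟩ h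
  simp only [polarCoord_symm_apply, Prod.mk.injEq] at h hθ₁ hθ₂ hS₁
  obtain ⟨hcos, hsin⟩ := h
  have hsub : sin (θ₁ - θ₂) = 0 := by
    have : S₁ * sin (θ₁ - θ₂) = 0 := by
      rw [sin_sub]
      linear_combination cos θ₂ * hsin - sin θ₂ * hcos
    exact (mul_eq_zero.1 this).resolve_left hS₁
  have hθ : θ₁ = θ₂ := sub_eq_zero.1 <|
    (sin_eq_zero_iff_of_lt_of_lt (by linarith [hθ₁.1, hθ₂.2]) (by linarith [hθ₁.2, hθ₂.1])).1 hsub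
  subst hθ
  have hS : S₁ = S₂ := by
    linear_combination cos θ₁ * hcos + sin θ₁ * hsin + (S₂ - S₁) * sin_sq_add_cos_sq θ₁
  rw [hS]

theorem polarCoord_source_subset_image_halfTurn :
    polarCoord.source ⊆ polarCoord.symm '' (({0}ᶜ : Set ℝ) ×ˢ Ico 0 π) := by
  rw [← polarCoord.symm_image_target_eq_source]
  rintro _ ⟨⟨r, θ⟩, ⟨hr, hθ⟩, rfl⟩
  simp only [mem_Ioi, mem_Ioo] at hr hθ
  rcases le_or_gt 0 θ with hθ₀ | hθ₀
  · exact ⟨(r, θ), ⟨hr.ne', hθ₀, hθ.2⟩, rfl⟩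
  · refine ⟨(-r, θ + π), ⟨by simpa using hr.ne', by linarith, by linarith⟩, ?_⟩
    simp [cos_add_pi, sin_add_pi]

theorem integral_halfTurn_polarCoord_symm {E : Type*} [NormedAddCommGroup E] [NormedSpace ℝ E]
    {H : ℝ × ℝ → E} (hH : Integrable H) :
    ∫ θ in Ico 0 π, ∫ S, |S| • H (S * cos θ, S * sin θ) = ∫ p, H p := by
  set s := ({0}ᶜ : Set ℝ) ×ˢ Ico 0 π
  have hs : MeasurableSet s := (measurableSet_singleton 0).compl.prod measurableSet_Ico
  have hderiv : ∀ p ∈ s, HasFDerivWithinAt polarCoord.symm (fderivPolarCoordSymm p) s p :=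
    fun p _ => (hasFDerivAt_polarCoord_symm p).hasFDerivWithinAt
  have himage : polarCoord.symm '' s =ᵐ[volume] univ :=
    ae_eq_univ.2 (measure_mono_null (compl_subset_compl.2 polarCoord_source_subset_image_halfTurn)
      (ae_eq_univ.1 polarCoord_source_ae_eq_univ))
  have hint : IntegrableOn (fun p => |p.1| • H (polarCoord.symm p)) s := by
    simpa only [det_fderivPolarCoordSymm] using
      (integrableOn_image_iff_integrableOn_abs_det_fderiv_smul volume hs hderiv
        injOn_polarCoord_symm_halfTurn H).1 hH.integrableOn
  calc ∫ θ in Ico 0 π, ∫ S, |S| • H (S * cos θ, S * sin θ)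
      = ∫ θ in Ico 0 π, ∫ S in {0}ᶜ, |S| • H (polarCoord.symm (S, θ)) := by
        simp only [restrict_compl_singleton, polarCoord_symm_apply]
    _ = ∫ p in s, |p.1| • H (polarCoord.symm p) := by
        rw [IntegrableOn, Measure.volume_eq_prod, ← Measure.prod_restrict] at hint
        rw [Measure.volume_eq_prod, ← Measure.prod_restrict]
        exact (integral_prod_symm _ hint).symm
    _ = ∫ p in polarCoord.symm '' s, H p := by
        simp only [integral_image_eq_integral_abs_det_fderiv_smul volume hs hderiv
          injOn_polarCoord_symm_halfTurn, det_fderivPolarCoordSymm]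
    _ = ∫ p, H p := by rw [setIntegral_congr_set himage, setIntegral_univ]

/-- Filtered back projection formula: for `f ∈ L¹(ℝ²)` continuous with `Ff ∈ L¹(ℝ²)`,
`f(x,y) = (1/(4π²)) ∫₀^π ∫ℝ F(Rf)(S,θ)·|S|·e^{iS(x·cos θ + y·sin θ)} dS dθ`. -/
theorem statement13 (f : ℝ × ℝ → ℝ) (hf : Integrable f) (hc : Continuous f)
    (hFf : Integrable (fun w : ℝ × ℝ =>
      ∫ p : ℝ × ℝ, (f p : ℂ) * Complex.exp (-Complex.I * (p.1 * w.1 + p.2 * w.2)))) :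
    ∀ x y : ℝ,
      (f (x, y) : ℂ) = ((1 / (4 * Real.pi ^ 2) : ℝ) : ℂ) *
        ∫ θ in Set.Ico 0 Real.pi, ∫ S : ℝ,
          (∫ t : ℝ,
              (↑(∫ s : ℝ, f (t * Real.cos θ - s * Real.sin θ, t * Real.sin θ + s * Real.cos θ)) : ℂ) *
                Complex.exp (-Complex.I * (S * t))) *
            (|S| : ℝ) * Complex.exp (Complex.I * (S * (x * Real.cos θ + y * Real.sin θ))) := by
  intro x y
  set g : ℝ × ℝ → ℂ := fun p => f p
  have hg : Integrable g := hf.ofReal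
  have hH : Integrable fun w => fourier₂ g w * Complex.exp (I * (x * w.1 + y * w.2)) :=
    hFf.mul_cexp (by fun_prop) (by simp)
  refine (fourier₂_inversion hg (by fun_prop) hFf (x, y)).trans ?_
  rw [← integral_halfTurn_polarCoord_symm hH, one_div]
  congr 1
  refine setIntegral_congr_fun measurableSet_Ico fun θ _ =>
    integral_congr_ae (ae_of_all _ fun S => ?_)
  have hslice : (∫ t : ℝ, (↑(∫ s : ℝ, f (t * cos θ - s * sin θ, t * sin θ + s * cos θ)) : ℂ) *
      Complex.exp (-I * (S * t))) = fourier₂ g (S * cos θ, S * sin θ) := by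
    simp only [← fourier₁_radon hg, fourier₁, radon, g, integral_complex_ofReal]
  dsimp only
  have hphase : (x : ℂ) * ↑(S * cos θ) + y * ↑(S * sin θ) = S * (x * cos θ + y * sin θ) := by
    push_cast
    ring
  rw [hslice, Complex.real_smul, hphase]
  ring
end

section
/- Shannon sampling theorem: if h ∈ L²(ℝ) has Fourier transform supported in [−L, L] for some L > 0, then h is uniquely determined by its samples h(πk/L), k ∈ ℤ, and h(t) = Σ_{k∈ℤ} h(πk/L) · sinc(Lt − kπ) for all t ∈ ℝ. -/
/-!
On `(-L, L]` the exponentials `ω ↦ exp(iπnω/L)` form an orthonormal basis of `L²`. In this basis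
the Fourier coefficients of `φ` are the samples `(π/L) h(-πn/L)` and those of `ω ↦ exp(-itω)` are
`sinc(Lt + nπ)`, while the `L²` pairing of the two functions is `2π h(t)`. Parseval's identity for
this pairing is the sampling formula, which also shows that `h` is determined by its samples.
-/

open MeasureTheory Real Filter

noncomputable def sinc (t : ℝ) : ℝ := if t = 0 then 1 else Real.sin t / t

open Set Complex Function
open scoped ComplexConjugate

theorem hasSum_prod_fourierCoeff {T : ℝ} [hT : Fact (0 < T)]
    (f g : Lp ℂ 2 (@AddCircle.haarAddCircle T hT)) :
    HasSum (fun n => conj (fourierCoeff f n) * fourierCoeff g n)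
      (∫ x, conj (f x) * g x ∂AddCircle.haarAddCircle) := by
  simp_rw [mul_comm (conj _)]
  refine HasSum.congr_fun (fourierBasis.hasSum_inner_mul_inner f g) fun n => ?_
  simp only [← fourierBasis_repr, HilbertBasis.repr_apply_apply, inner_conj_symm,
    mul_comm (inner ℂ f _)]

theorem hasSum_prod_fourierCoeffOn {a b : ℝ} (hab : a < b) {f g : ℝ → ℂ}
    (hf : MemLp f 2 (volume.restrict (Ioc a b))) (hg : MemLp g 2 (volume.restrict (Ioc a b))) :
    HasSum (fun n => conj (fourierCoeffOn hab f n) * fourierCoeffOn hab g n)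
      ((b - a)⁻¹ • ∫ x in a..b, conj (f x) * g x) := by
  have := Fact.mk (sub_pos.2 hab)
  rw [← add_sub_cancel a b] at hf hg
  have hf' := hf.memLp_liftIoc.haarAddCircle
  have hg' := hg.memLp_liftIoc.haarAddCircle
  convert hasSum_prod_fourierCoeff hf'.toLp hg'.toLp using 1
  · simp [fourierCoeff_congr_ae hf'.coeFn_toLp, fourierCoeff_congr_ae hg'.coeFn_toLp,
      fourierCoeff_liftIoc_eq]
  · nth_rw 2 [← add_sub_cancel a b]
    rw [← AddCircle.integral_liftIoc_eq_intervalIntegral, ← AddCircle.integral_haarAddCircle]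
    refine integral_congr_ae ?_
    filter_upwards [hf'.coeFn_toLp, hg'.coeFn_toLp] with x hfx hgx
    rw [hfx, hgx]
    rfl

/-- `h = invFourierAngular φ` says that `φ` is the Fourier transform `ω ↦ ∫ h(t) e^{-iωt} dt`
of `h`, inverted with the normalisation `1 / (2π)` of angular frequency. -/
noncomputable def invFourierAngular (φ : ℝ → ℂ) (t : ℝ) : ℂ :=
  ((1 / (2 * π) : ℝ) : ℂ) * ∫ ω : ℝ, φ ω * exp (I * (ω * t))

theorem integral_eq_intervalIntegral_of_support_subset_Icc {E : Type*} [NormedAddCommGroup E]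
    [NormedSpace ℝ E] {f : ℝ → E} {a b : ℝ} (hab : a ≤ b) (hf : support f ⊆ Icc a b) :
    ∫ x, f x = ∫ x in a..b, f x := by
  rw [intervalIntegral.integral_of_le hab, ← integral_Icc_eq_integral_Ioc,
    setIntegral_eq_integral_of_forall_compl_eq_zero]
  exact fun x hx => notMem_support.1 fun hfx => hx (hf hfx)

theorem intervalIntegral_exp_mul_I (L θ : ℝ) :
    ∫ x in -L..L, exp (θ * x * I) = 2 * L * Real.sinc (L * θ) := by
  rcases eq_or_ne θ 0 with rfl | hθ
  · simp [two_mul]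
  simp_rw [← ofReal_mul]
  rw [intervalIntegral.integral_comp_mul_left (fun x : ℝ => exp (x * I)) hθ,
    mul_neg, integral_exp_mul_I_eq_sinc, mul_comm L θ, real_smul]
  have : (θ : ℂ) ≠ 0 := ofReal_ne_zero.2 hθ
  push_cast
  field_simp

theorem fourierCoeffOn_neg_self_eq_integral {L : ℝ} (hL : 0 < L) (f : ℝ → ℂ) (n : ℤ) :
    fourierCoeffOn (neg_lt_self hL) f n =
      (2 * L)⁻¹ * ∫ x in -L..L, exp (-(π * n / L) * x * I) * f x := by
  rw [fourierCoeffOn_eq_integral, sub_neg_eq_add, ← two_mul, real_smul]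
  push_cast
  congr 1
  · ring
  refine intervalIntegral.integral_congr fun x _ => ?_
  rw [fourier_coe_apply, smul_eq_mul]
  congr 2
  push_cast
  field_simp

theorem intervalIntegral_eq_invFourierAngular {L : ℝ} (hL : 0 < L) {φ : ℝ → ℂ}
    (hφ : support φ ⊆ Icc (-L) L) (s : ℝ) :
    ∫ ω in -L..L, φ ω * exp (I * (ω * s)) = 2 * π * invFourierAngular φ s := by
  rw [invFourierAngular, ← integral_eq_intervalIntegral_of_support_subset_Icc
    (neg_le_self hL.le) ((support_mul_subset_left _ _).trans hφ)]
  push_cast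
  field_simp
  congr 1
  ext ω
  ring_nf

theorem fourierCoeffOn_eq_invFourierAngular {L : ℝ} (hL : 0 < L) {φ : ℝ → ℂ}
    (hφ : support φ ⊆ Icc (-L) L) (n : ℤ) :
    fourierCoeffOn (neg_lt_self hL) φ n = π / L * invFourierAngular φ (-(π * n / L)) := by
  have hint := intervalIntegral_eq_invFourierAngular hL hφ (-(π * n / L))
  rw [fourierCoeffOn_neg_self_eq_integral hL]
  have : ∫ x in -L..L, exp (-(π * n / L) * x * I) * φ x =
      ∫ ω in -L..L, φ ω * exp (I * (ω * ((-(π * n / L) : ℝ) : ℂ))) := by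
    refine intervalIntegral.integral_congr fun x _ => ?_
    push_cast
    ring_nf
  have hL' : (L : ℂ) ≠ 0 := ofReal_ne_zero.2 hL.ne'
  rw [this, hint]
  push_cast
  field_simp

theorem fourierCoeffOn_exp_neg_mul_I {L : ℝ} (hL : 0 < L) (t : ℝ) (n : ℤ) :
    fourierCoeffOn (neg_lt_self hL) (fun ω : ℝ => exp (-(t * ω) * I)) n =
      Real.sinc (L * t + n * π) := by
  rw [fourierCoeffOn_neg_self_eq_integral hL]
  have : ∫ x in -L..L, exp (-(π * n / L) * x * I) * exp (-(t * x) * I) =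
      ∫ x in -L..L, exp (((-(t + π * n / L) : ℝ) : ℂ) * x * I) := by
    refine intervalIntegral.integral_congr fun x _ => ?_
    rw [← Complex.exp_add]
    push_cast
    ring_nf
  have hL' : (L : ℂ) ≠ 0 := ofReal_ne_zero.2 hL.ne'
  rw [this, intervalIntegral_exp_mul_I, show L * -(t + π * n / L) = -(L * t + n * π) by
    field_simp, Real.sinc_neg]
  push_cast
  field_simp

theorem hasSum_invFourierAngular_mul_sinc {L : ℝ} (hL : 0 < L) {φ : ℝ → ℂ} (hφ2 : MemLp φ 2)
    (hφ : support φ ⊆ Icc (-L) L) (t : ℝ) :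
    HasSum (fun k : ℤ => invFourierAngular φ (π * k / L) * Real.sinc (L * t - k * π))
      (invFourierAngular φ t) := by
  have hexp : MemLp (fun ω : ℝ => exp (-(t * ω) * I)) 2 (volume.restrict (Ioc (-L) L)) :=
    MemLp.of_bound (Continuous.aestronglyMeasurable (by fun_prop)) 1
      (ae_of_all _ fun ω => by simp [norm_exp])
  have parseval := hasSum_prod_fourierCoeffOn (neg_lt_self hL) hexp (hφ2.restrict _)
  simp only [fourierCoeffOn_exp_neg_mul_I hL, fourierCoeffOn_eq_invFourierAngular hL hφ,
    conj_ofReal] at parseval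
  have hint : ∫ x in -L..L, conj (exp (-(t * x) * I)) * φ x =
      ∫ ω in -L..L, φ ω * exp (I * (ω * t)) := by
    refine intervalIntegral.integral_congr fun x _ => ?_
    rw [← exp_conj]
    simp only [map_neg, map_mul, conj_ofReal, conj_I]
    ring_nf
  rw [hint, intervalIntegral_eq_invFourierAngular hL hφ] at parseval
  have hc : (π / L : ℂ) ≠ 0 :=
    div_ne_zero (ofReal_ne_zero.2 pi_ne_zero) (ofReal_ne_zero.2 hL.ne')
  have hval : (L - -L)⁻¹ • (2 * π * invFourierAngular φ t) = π / L * invFourierAngular φ t := by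
    have hL' : (L : ℂ) ≠ 0 := ofReal_ne_zero.2 hL.ne'
    rw [real_smul]
    push_cast
    field_simp
    ring
  rw [hval] at parseval
  rw [← hasSum_mul_left_iff hc, ← (Equiv.neg ℤ).hasSum_iff]
  refine parseval.congr_fun fun n => ?_
  simp only [Equiv.neg_apply, comp_apply, Int.cast_neg, mul_neg, neg_div, neg_mul, sub_neg_eq_add]
  ring

theorem statement15_general (L : ℝ) (hL : 0 < L) (h : ℝ → ℂ)
    (φ : ℝ → ℂ) (hφ2 : MemLp φ 2) (hφsupp : Function.support φ ⊆ Set.Icc (-L) L)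
    (hrep : ∀ t : ℝ, h t =
      ((1 / (2 * Real.pi) : ℝ) : ℂ) * ∫ ω : ℝ, φ ω * Complex.exp (Complex.I * (ω * t))) :
    (∀ t : ℝ, h t = ∑' k : ℤ, h (Real.pi * k / L) * ((_root_.sinc (L * t - k * Real.pi) : ℝ) : ℂ)) ∧
    ∀ h' : ℝ → ℂ, MemLp h' 2 →
      (∃ φ' : ℝ → ℂ, MemLp φ' 2 ∧ Function.support φ' ⊆ Set.Icc (-L) L ∧
        ∀ t : ℝ, h' t =
          ((1 / (2 * Real.pi) : ℝ) : ℂ) * ∫ ω : ℝ, φ' ω * Complex.exp (Complex.I * (ω * t))) →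
      (∀ k : ℤ, h' (Real.pi * k / L) = h (Real.pi * k / L)) → h' = h := by
  obtain rfl : h = invFourierAngular φ := funext hrep
  refine ⟨fun t => (hasSum_invFourierAngular_mul_sinc hL hφ2 hφsupp t).tsum_eq.symm, ?_⟩
  rintro h' - ⟨φ', hφ'2, hφ'supp, hrep'⟩ hsamples
  obtain rfl : h' = invFourierAngular φ' := funext hrep'
  funext t
  rw [← (hasSum_invFourierAngular_mul_sinc hL hφ'2 hφ'supp t).tsum_eq,
    ← (hasSum_invFourierAngular_mul_sinc hL hφ2 hφsupp t).tsum_eq]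
  simp_rw [hsamples]

/-- Shannon sampling theorem: if `h ∈ L²(ℝ)` is band-limited with Fourier transform `φ`
supported in `[−L, L]` (i.e. `h` is the inverse Fourier transform of `φ ∈ L²` with
`supp φ ⊆ [−L, L]`), then `h(t) = Σ_{k∈ℤ} h(πk/L)·sinc(Lt − kπ)` for all `t`, and `h` is
uniquely determined by its samples `h(πk/L)`, `k ∈ ℤ`. -/
theorem statement15 (L : ℝ) (hL : 0 < L) (h : ℝ → ℂ) (hh2 : MemLp h 2)
    (φ : ℝ → ℂ) (hφ2 : MemLp φ 2) (hφsupp : Function.support φ ⊆ Set.Icc (-L) L)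
    (hrep : ∀ t : ℝ, h t =
      ((1 / (2 * Real.pi) : ℝ) : ℂ) * ∫ ω : ℝ, φ ω * Complex.exp (Complex.I * (ω * t))) :
    (∀ t : ℝ, h t = ∑' k : ℤ, h (Real.pi * k / L) * ((_root_.sinc (L * t - k * Real.pi) : ℝ) : ℂ)) ∧
    ∀ h' : ℝ → ℂ, MemLp h' 2 →
      (∃ φ' : ℝ → ℂ, MemLp φ' 2 ∧ Function.support φ' ⊆ Set.Icc (-L) L ∧
        ∀ t : ℝ, h' t =
          ((1 / (2 * Real.pi) : ℝ) : ℂ) * ∫ ω : ℝ, φ' ω * Complex.exp (Complex.I * (ω * t))) →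
      (∀ k : ℤ, h' (Real.pi * k / L) = h (Real.pi * k / L)) → h' = h :=
  statement15_general L hL h φ hφ2 hφsupp hrep
end

section
/- Iterated orthogonal projections: for j = 1,…,M let P_j be the orthogonal projection onto a linear subspace V_j ⊆ ℝ^N and set P = P_M ⋯ P_1. Then for every x ∈ ℝ^N, P^k x converges as k → ∞ to Tx, where T is the orthogonal projection onto ker(Id − P). -/
/-!
Every orthogonal projection `P` is a contraction that fixes each vector whose norm it
preserves; composites of such maps inherit both properties, so `Q` has them. For a contraction,
`Q z = z` forces `Q† z = z` (expand `‖Q† z - z‖²`), hence `Q` maps the orthogonal complement `W` of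
its fixed subspace into itself. On `W` the map strictly shrinks every nonzero vector, so by
compactness of the unit ball of `W` it is a strict contraction there, and `Q^k x` converges to
the component of `x` in the fixed subspace.
-/

open Filter Topology

section Contraction

variable {E F : Type*} [NormedAddCommGroup E] [NormedSpace ℝ E]
  [SeminormedAddCommGroup F] [NormedSpace ℝ F]

theorem Submodule.exists_lt_one_norm_le_mul_of_norm_lt [FiniteDimensional ℝ E]
    (K : Submodule ℝ E) (T : E →L[ℝ] F) (hT : ∀ y ∈ K, y ≠ 0 → ‖T y‖ < ‖y‖) :
    ∃ c, 0 ≤ c ∧ c < 1 ∧ ∀ y ∈ K, ‖T y‖ ≤ c * ‖y‖ := by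
  set B : Set E := Metric.closedBall 0 1 ∩ K
  have hB : IsCompact B := (isCompact_closedBall 0 1).inter_right K.closed_of_finiteDimensional
  obtain ⟨y₀, ⟨hy₀1, hy₀K⟩, hmax⟩ :=
    hB.exists_isMaxOn ⟨0, by simp [B]⟩ (continuous_norm.comp T.continuous).continuousOn
  refine ⟨‖T y₀‖, norm_nonneg _, ?_, fun y hy => ?_⟩
  · rcases eq_or_ne y₀ 0 with rfl | hy₀
    · simp
    · exact (hT y₀ hy₀K hy₀).trans_le (mem_closedBall_zero_iff.mp hy₀1)
  · rcases eq_or_ne y 0 with rfl | hy0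
    · simp
    have hunit : ‖y‖⁻¹ • y ∈ B :=
      ⟨mem_closedBall_zero_iff.mpr (norm_smul_inv_norm hy0).le, K.smul_mem _ hy⟩
    have hle : ‖y‖⁻¹ * ‖T y‖ ≤ ‖T y₀‖ := by
      simpa [map_smul, norm_smul] using hmax hunit
    rwa [inv_mul_le_iff₀ (norm_pos_iff.mpr hy0), mul_comm] at hle

theorem tendsto_pow_apply_zero_of_norm_le_mul (T : E →L[ℝ] E) {K : Set E} (hK : Set.MapsTo T K K)
    {c : ℝ} (hc0 : 0 ≤ c) (hc1 : c < 1) (hT : ∀ y ∈ K, ‖T y‖ ≤ c * ‖y‖) {y : E} (hy : y ∈ K) :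
    Tendsto (fun k : ℕ => (T ^ k) y) atTop (𝓝 0) := by
  have hbound : ∀ k : ℕ, ‖(T ^ k) y‖ ≤ c ^ k * ‖y‖ := by
    intro k
    induction k with
    | zero => simp
    | succ k ih =>
      have hmem : (T ^ k) y ∈ K := by
        rw [FunLike.coe_pow_eq_iterate]; exact hK.iterate k hy
      calc ‖(T ^ (k + 1)) y‖ = ‖T ((T ^ k) y)‖ := by rw [pow_succ']; rfl
        _ ≤ c * ‖(T ^ k) y‖ := hT _ hmem
        _ ≤ c * (c ^ k * ‖y‖) := mul_le_mul_of_nonneg_left ih hc0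
        _ = c ^ (k + 1) * ‖y‖ := by ring
  refine squeeze_zero_norm hbound ?_
  simpa using (tendsto_pow_atTop_nhds_zero_of_lt_one hc0 hc1).mul_const ‖y‖

end Contraction

section RigidContraction

variable {E : Type*} [NormedAddCommGroup E]

structure IsRigidContraction [NormedSpace ℝ E] (T : E →L[ℝ] E) : Prop where
  norm_le : ∀ y, ‖T y‖ ≤ ‖y‖
  eq_of_norm_eq : ∀ y, ‖T y‖ = ‖y‖ → T y = y

def fixedSubspace [NormedSpace ℝ E] (T : E →L[ℝ] E) : Submodule ℝ E :=
  LinearMap.ker ((ContinuousLinearMap.id ℝ E - T : E →L[ℝ] E) : E →ₗ[ℝ] E)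

theorem mem_fixedSubspace [NormedSpace ℝ E] {T : E →L[ℝ] E} {z : E} :
    z ∈ fixedSubspace T ↔ T z = z := by
  simp only [fixedSubspace, LinearMap.mem_ker, ContinuousLinearMap.coe_coe,
    sub_apply, ContinuousLinearMap.id_apply, sub_eq_zero]
  exact eq_comm

namespace IsRigidContraction

variable [NormedSpace ℝ E]

theorem one : IsRigidContraction (1 : E →L[ℝ] E) :=
  ⟨fun _ => le_rfl, fun _ _ => rfl⟩

theorem mul {S T : E →L[ℝ] E} (hS : IsRigidContraction S) (hT : IsRigidContraction T) :
    IsRigidContraction (S * T) where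
  norm_le y := (hS.norm_le (T y)).trans (hT.norm_le y)
  eq_of_norm_eq y h := by
    have hTy : ‖T y‖ = ‖y‖ :=
      le_antisymm (hT.norm_le y) (h.symm.le.trans (hS.norm_le (T y)))
    change ‖S (T y)‖ = ‖y‖ at h
    change S (T y) = y
    rw [hT.eq_of_norm_eq y hTy] at h ⊢
    exact hS.eq_of_norm_eq y h

theorem list_prod {L : List (E →L[ℝ] E)} (h : ∀ T ∈ L, IsRigidContraction T) :
    IsRigidContraction L.prod :=
  List.prod_induction _ (fun _ _ => mul) one h

end IsRigidContraction

variable [InnerProductSpace ℝ E]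

theorem Submodule.isRigidContraction_starProjection (K : Submodule ℝ E)
    [K.HasOrthogonalProjection] : IsRigidContraction K.starProjection where
  norm_le := K.norm_starProjection_apply_le
  eq_of_norm_eq y h := K.starProjection_eq_self_iff.mpr ((K.mem_iff_norm_starProjection y).mpr h)

theorem ContinuousLinearMap.adjoint_apply_eq_self_of_norm_le [CompleteSpace E] {T : E →L[ℝ] E}
    (hT : ∀ y, ‖T y‖ ≤ ‖y‖) {z : E} (hz : T z = z) : adjoint T z = z := by
  have hnorm : ‖adjoint T‖ ≤ 1 := by
    rw [LinearIsometryEquiv.norm_map]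
    exact T.opNorm_le_bound zero_le_one fun y => by simpa using hT y
  have hinner : inner ℝ (adjoint T z) z = ‖z‖ ^ 2 := by
    rw [adjoint_inner_left, hz, real_inner_self_eq_norm_sq]
  have hsq : ‖adjoint T z - z‖ ^ 2 ≤ 0 := by
    have := (adjoint T).le_of_opNorm_le hnorm z
    rw [norm_sub_sq_real, hinner]
    nlinarith [norm_nonneg (adjoint T z), norm_nonneg z]
  exact sub_eq_zero.mp (norm_eq_zero.mp ((sq_nonpos_iff _).mp hsq))

theorem mapsTo_orthogonal_fixedSubspace [CompleteSpace E] {T : E →L[ℝ] E}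
    (hT : ∀ y, ‖T y‖ ≤ ‖y‖) : Set.MapsTo T (fixedSubspace T)ᗮ (fixedSubspace T)ᗮ := by
  intro y hy z hz
  rw [← ContinuousLinearMap.adjoint_inner_left,
    ContinuousLinearMap.adjoint_apply_eq_self_of_norm_le hT (mem_fixedSubspace.mp hz)]
  exact hy z hz

theorem IsRigidContraction.tendsto_pow_apply [FiniteDimensional ℝ E] {T : E →L[ℝ] E}
    (hT : IsRigidContraction T) (x : E) :
    Tendsto (fun k : ℕ => (T ^ k) x) atTop (𝓝 ((fixedSubspace T).starProjection x)) := by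
  set W := fixedSubspace T
  set p := W.starProjection x
  have hstrict : ∀ y ∈ Wᗮ, y ≠ 0 → ‖T y‖ < ‖y‖ := fun y hy hy0 =>
    (hT.norm_le y).lt_of_ne fun h => hy0 <| Submodule.disjoint_def.mp W.orthogonal_disjoint y
      (mem_fixedSubspace.mpr (hT.eq_of_norm_eq y h)) hy
  obtain ⟨c, hc0, hc1, hc⟩ := Wᗮ.exists_lt_one_norm_le_mul_of_norm_lt T hstrict
  have hfix : ∀ k : ℕ, (T ^ k) p = p := fun k => by
    rw [FunLike.coe_pow_eq_iterate]
    exact Function.iterate_fixed (mem_fixedSubspace.mp (W.starProjection_apply_mem x)) k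
  have hdecay : Tendsto (fun k : ℕ => (T ^ k) (x - p)) atTop (𝓝 0) :=
    tendsto_pow_apply_zero_of_norm_le_mul T (mapsTo_orthogonal_fixedSubspace hT.norm_le) hc0 hc1
      hc (W.sub_starProjection_mem_orthogonal x)
  simpa [map_sub, hfix] using (tendsto_const_nhds (x := p)).add hdecay

end RigidContraction

/-- Iterated orthogonal projections: if `P_1, …, P_M` are orthogonal projections onto
linear subspaces of `ℝ^N` and `Q = P_M ⋯ P_1`, then for every `x`, `Q^k x` converges as
`k → ∞` to `Tx`, where `T` is the orthogonal projection onto `ker(Id − Q)`. -/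
theorem statement17 {N M : ℕ}
    (V : Fin M → Submodule ℝ (EuclideanSpace ℝ (Fin N)))
    (P : Fin M → EuclideanSpace ℝ (Fin N) →L[ℝ] EuclideanSpace ℝ (Fin N))
    (hP : ∀ j, P j = (V j).subtypeL.comp (Submodule.orthogonalProjectionOnto (V j)))
    (Q : EuclideanSpace ℝ (Fin N) →L[ℝ] EuclideanSpace ℝ (Fin N))
    (hQ : Q = (List.ofFn P).reverse.prod) :
    ∀ x : EuclideanSpace ℝ (Fin N),
      Tendsto (fun k : ℕ => (Q ^ k) x) atTop
        (nhds ((LinearMap.ker ((ContinuousLinearMap.id ℝ (EuclideanSpace ℝ (Fin N)) - Q : EuclideanSpace ℝ (Fin N) →L[ℝ] EuclideanSpace ℝ (Fin N)) : EuclideanSpace ℝ (Fin N) →ₗ[ℝ] EuclideanSpace ℝ (Fin N))).subtypeL.comp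
          (Submodule.orthogonalProjectionOnto
            (LinearMap.ker ((ContinuousLinearMap.id ℝ (EuclideanSpace ℝ (Fin N)) - Q : EuclideanSpace ℝ (Fin N) →L[ℝ] EuclideanSpace ℝ (Fin N)) : EuclideanSpace ℝ (Fin N) →ₗ[ℝ] EuclideanSpace ℝ (Fin N)))) x)) := by
  have hQrigid : IsRigidContraction Q := by
    rw [hQ]
    refine IsRigidContraction.list_prod fun T hT => ?_
    obtain ⟨j, rfl⟩ := List.mem_ofFn.mp (List.mem_reverse.mp hT)
    rw [hP j]
    exact (V j).isRigidContraction_starProjection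
  exact hQrigid.tendsto_pow_apply
end

section
/- Convergence of Kaczmarz's method: let A ∈ ℝ^{M×N} with rows a_j and y ∈ ℝ^M such that Ac = y has a solution. Define Π_j u = u − ((a_jᵀu − y_j)/(a_jᵀa_j))·a_j and Π = Π_M ⋯ Π_1, and iterate c^{(k)} = Π c^{(k−1)} from a starting vector c^{(0)}. Then c^{(k)} converges to a solution c* of Ac = y; if moreover c^{(0)} lies in the range of Aᵀ (e.g. c^{(0)} = 0), then c* is the minimal Euclidean norm solution. -/
/-!
Each step `Π_j` is affine, with linear part the orthogonal projection onto `a_jᗮ`, so the sweep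
`Π` is affine with linear part `P = P_M ⋯ P_1` and fixes every solution. An orthogonal
projection strictly shortens every vector it moves, hence `P` strictly shortens every vector
that some factor moves; on `W = span {a_j}` only `0` is fixed by all factors, and `P` maps `W`
into itself, so by compactness of the unit sphere of the finite-dimensional `W` it is a strict
contraction there. Given any solution `c`, the vector `c* = c₀ - proj_W (c₀ - c)` is a solution
with `c₀ - c* ∈ W`, so the iterates are `c* + P^k (c₀ - c*) → c*`. If `c₀ ∈ W` then `c* ∈ W`,
so `c*` is the orthogonal projection onto `W` of every solution and has minimal norm.
-/

open Matrix Filter Topology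

theorem Fin.foldl_hom {α β : Type*} {n : ℕ} (f : α → β) {g : α → Fin n → α}
    {g' : β → Fin n → β} (h : ∀ x j, f (g x j) = g' (f x) j) (x : α) :
    f (Fin.foldl n g x) = Fin.foldl n g' (f x) := by
  simp only [Fin.foldl_eq_foldl_finRange]
  exact (List.foldl_hom f fun x j => (h x j).symm).symm

theorem Fin.foldl_mul_eq_prod {Mo : Type*} [Monoid Mo] {n : ℕ} (T : Fin n → Mo) :
    Fin.foldl n (fun S j => T j * S) 1 = (List.ofFn T).reverse.prod := by
  rw [Fin.foldl_eq_foldl_finRange, List.ofFn_eq_map, List.prod_eq_foldr, List.foldr_reverse,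
    List.foldl_map]

theorem AffineMap.iterate_apply_of_isFixedPt {R V : Type*} [Ring R] [AddCommGroup V]
    [Module R V] (f : V →ᵃ[R] V) {c : V} (hc : Function.IsFixedPt f c) (k : ℕ) (x : V) :
    f^[k] x = (f.linear ^ k) (x - c) + c := by
  induction k with
  | zero => simp
  | succ k ih =>
    rw [Function.iterate_succ_apply', ih, ← vadd_eq_add, AffineMap.map_vadd, hc, pow_succ',
      Module.End.mul_apply, vadd_eq_add]

section StrictContraction

variable {F : Type*} [NormedAddCommGroup F] [NormedSpace ℝ F] [FiniteDimensional ℝ F]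

theorem LinearMap.exists_lt_one_norm_apply_le (T : F →ₗ[ℝ] F) (hT : ∀ x ≠ 0, ‖T x‖ < ‖x‖) :
    ∃ r, 0 ≤ r ∧ r < 1 ∧ ∀ x, ‖T x‖ ≤ r * ‖x‖ := by
  rcases subsingleton_or_nontrivial F with hF | hF
  · exact ⟨0, le_rfl, zero_lt_one, fun x => by simp [Subsingleton.elim x 0]⟩
  obtain ⟨x₀, hx₀, hmax⟩ := (isCompact_sphere (0 : F) 1).exists_isMaxOn
    (NormedSpace.sphere_nonempty.mpr zero_le_one)
    (continuous_norm.comp T.continuous_of_finiteDimensional).continuousOn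
  rw [mem_sphere_zero_iff_norm] at hx₀
  refine ⟨‖T x₀‖, norm_nonneg _, hx₀ ▸ hT x₀ (ne_zero_of_norm_ne_zero (by simp [hx₀])),
    fun x => ?_⟩
  rcases eq_or_ne x 0 with rfl | hx
  · simp
  have hu : ‖x‖⁻¹ • x ∈ Metric.sphere (0 : F) 1 := by simp [norm_smul, hx]
  have h : ‖T (‖x‖⁻¹ • x)‖ ≤ ‖T x₀‖ := hmax hu
  rwa [map_smul, norm_smul, norm_inv, norm_norm, inv_mul_le_iff₀ (norm_pos_iff.mpr hx),
    mul_comm] at h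

theorem LinearMap.tendsto_pow_apply_of_norm_apply_lt (T : F →ₗ[ℝ] F)
    (hT : ∀ x ≠ 0, ‖T x‖ < ‖x‖) (x : F) : Tendsto (fun k => (T ^ k) x) atTop (𝓝 0) := by
  obtain ⟨r, hr0, hr1, hr⟩ := T.exists_lt_one_norm_apply_le hT
  have hbound : ∀ k, ‖(T ^ k) x‖ ≤ r ^ k * ‖x‖ := by
    intro k
    induction k with
    | zero => simp
    | succ k ih =>
      rw [pow_succ', Module.End.mul_apply, pow_succ', mul_assoc]
      exact (hr _).trans (mul_le_mul_of_nonneg_left ih hr0)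
  refine squeeze_zero_norm hbound ?_
  simpa using (tendsto_pow_atTop_nhds_zero_of_lt_one hr0 hr1).mul_const ‖x‖

end StrictContraction

section Paracontracting

variable {E : Type*} [NormedAddCommGroup E]

def IsParacontracting (T : E → E) : Prop :=
  ∀ x, T x ≠ x → ‖T x‖ < ‖x‖

theorem IsParacontracting.norm_apply_le {T : E → E} (hT : IsParacontracting T) (x : E) :
    ‖T x‖ ≤ ‖x‖ := by
  by_cases h : T x = x
  · rw [h]
  · exact (hT x h).le

theorem norm_list_prod_apply_lt {R : Type*} [Semiring R] [Module R E]
    {L : List (Module.End R E)} (hL : ∀ T ∈ L, IsParacontracting T) {x : E}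
    (hx : ∃ T ∈ L, T x ≠ x) : ‖L.prod x‖ < ‖x‖ := by
  induction L with
  | nil => simp at hx
  | cons T L ih =>
    rw [List.prod_cons, Module.End.mul_apply]
    have hT := hL T List.mem_cons_self
    by_cases hL' : ∃ S ∈ L, S x ≠ x
    · exact (hT.norm_apply_le _).trans_lt
        (ih (fun S hS => hL S (List.mem_cons_of_mem T hS)) hL')
    · push Not at hL'
      have hfix : L.prod x = x :=
        List.prod_induction (fun S : Module.End R E => S x = x)
          (fun S S' hS hS' => by rw [Module.End.mul_apply, hS', hS]) rfl hL'
      obtain ⟨S, hS, hSx⟩ := hx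
      rcases List.mem_cons.mp hS with rfl | hS
      · rw [hfix]
        exact hT x hSx
      · exact absurd (hL' S hS) hSx

end Paracontracting

section Kaczmarz

variable {E : Type*} [NormedAddCommGroup E] [InnerProductSpace ℝ E]

theorem Submodule.isParacontracting_starProjection (K : Submodule ℝ E)
    [K.HasOrthogonalProjection] : IsParacontracting K.starProjection := fun x hx =>
  (K.norm_starProjection_apply_le x).lt_of_ne fun h =>
    hx (K.starProjection_eq_self_iff.mpr ((K.mem_iff_norm_starProjection x).mpr h))

theorem Submodule.mem_orthogonal_span_range_iff {ι : Type*} {a : ι → E} {v : E} :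
    v ∈ (Submodule.span ℝ (Set.range a))ᗮ ↔ ∀ j, inner ℝ (a j) v = 0 := by
  simp only [Submodule.span_range_eq_iSup, ← Submodule.iInf_orthogonal, Submodule.mem_iInf,
    Submodule.mem_orthogonal_singleton_iff_inner_right]

/-- The orthogonal projection onto the hyperplane `⟪a, x⟫ = t`, whose point closest to `0` is
`(t / ‖a‖ ^ 2) • a`. -/
noncomputable def hyperplaneProj (a : E) (t : ℝ) : E →ᵃ[ℝ] E :=
  ((ℝ ∙ a)ᗮ.starProjection : E →ₗ[ℝ] E).toAffineMap +
    AffineMap.const ℝ E ((t / ‖a‖ ^ 2) • a)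

theorem hyperplaneProj_apply (a : E) (t : ℝ) (v : E) :
    hyperplaneProj a t v = v - ((inner ℝ a v - t) / inner ℝ a a) • a := by
  simp [hyperplaneProj, Submodule.starProjection_singleton, sub_div, sub_smul]
  abel

theorem hyperplaneProj_linear (a : E) (t : ℝ) :
    (hyperplaneProj a t).linear = (ℝ ∙ a)ᗮ.starProjection := by
  simp [hyperplaneProj]

theorem hyperplaneProj_apply_eq_self {a c : E} {t : ℝ} (h : inner ℝ a c = t) :
    hyperplaneProj a t c = c := by
  simp [hyperplaneProj_apply, h]

noncomputable def kaczmarzSweep {M : ℕ} (a : Fin M → E) (y : Fin M → ℝ) : E →ᵃ[ℝ] E :=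
  (List.ofFn fun j => hyperplaneProj (a j) (y j)).reverse.prod

variable {M : ℕ} (a : Fin M → E) (y : Fin M → ℝ)

theorem kaczmarzSweep_apply (x : E) :
    kaczmarzSweep a y x = Fin.foldl M (fun v j => hyperplaneProj (a j) (y j) v) x := by
  rw [kaczmarzSweep, ← Fin.foldl_mul_eq_prod]
  exact Fin.foldl_hom (fun S : E →ᵃ[ℝ] E => S x) (fun _ _ => rfl) 1

theorem kaczmarzSweep_linear :
    (kaczmarzSweep a y).linear =
      (List.ofFn fun j => ((ℝ ∙ a j)ᗮ.starProjection : Module.End ℝ E)).reverse.prod := by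
  rw [← AffineMap.linearHom_apply, kaczmarzSweep, map_list_prod, List.map_reverse,
    List.map_ofFn]
  simp [Function.comp_def, hyperplaneProj_linear]

theorem kaczmarzSweep_apply_eq_self {c : E} (hc : ∀ j, inner ℝ (a j) c = y j) :
    kaczmarzSweep a y c = c :=
  List.prod_induction (fun S : E →ᵃ[ℝ] E => S c = c)
    (fun S S' hS hS' => by rw [AffineMap.coe_mul, Function.comp_apply, hS', hS]) rfl
    (by simpa using fun j => hyperplaneProj_apply_eq_self (hc j))

theorem kaczmarzSweep_linear_mem_span :
    ∀ v ∈ Submodule.span ℝ (Set.range a),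
      (kaczmarzSweep a y).linear v ∈ Submodule.span ℝ (Set.range a) := by
  rw [kaczmarzSweep_linear]
  refine List.prod_induction
    (fun S : Module.End ℝ E => ∀ v ∈ Submodule.span ℝ (Set.range a),
      S v ∈ Submodule.span ℝ (Set.range a))
    (fun S S' hS hS' v hv => hS _ (hS' v hv)) (fun v hv => hv) ?_
  simp only [List.mem_reverse, List.mem_ofFn, forall_exists_index]
  rintro _ j rfl v hv
  have haj : (ℝ ∙ a j) ≤ Submodule.span ℝ (Set.range a) :=
    (Submodule.span_singleton_le_iff_mem _ _).mpr (Submodule.subset_span ⟨j, rfl⟩)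
  simpa using Submodule.sub_mem _ hv (haj ((ℝ ∙ a j).starProjection_apply_mem v))

theorem norm_kaczmarzSweep_linear_lt {v : E} (hv : v ∈ Submodule.span ℝ (Set.range a))
    (hv0 : v ≠ 0) : ‖(kaczmarzSweep a y).linear v‖ < ‖v‖ := by
  rw [kaczmarzSweep_linear]
  obtain ⟨j, hj⟩ : ∃ j, inner ℝ (a j) v ≠ 0 := by
    by_contra! h
    exact hv0 (Submodule.disjoint_def.mp (Submodule.orthogonal_disjoint _) v hv
      (Submodule.mem_orthogonal_span_range_iff.mpr h))
  refine norm_list_prod_apply_lt ?_ ⟨_, List.mem_reverse.mpr (List.mem_ofFn.mpr ⟨j, rfl⟩), ?_⟩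
  · simpa using fun j => (ℝ ∙ a j)ᗮ.isParacontracting_starProjection
  · rwa [ContinuousLinearMap.coe_coe, Ne, Submodule.starProjection_eq_self_iff,
      Submodule.mem_orthogonal_singleton_iff_inner_right]

theorem tendsto_iterate_kaczmarzSweep {cs : E} (hcs : ∀ j, inner ℝ (a j) cs = y j) (x₀ : E) :
    ∃ cstar : E, (∀ j, inner ℝ (a j) cstar = y j) ∧
      Tendsto (fun k => (kaczmarzSweep a y)^[k] x₀) atTop (𝓝 cstar) ∧
      (x₀ ∈ Submodule.span ℝ (Set.range a) →
        ∀ c : E, (∀ j, inner ℝ (a j) c = y j) → ‖cstar‖ ≤ ‖c‖) := by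
  set W := Submodule.span ℝ (Set.range a)
  have : FiniteDimensional ℝ W := FiniteDimensional.span_of_finite ℝ (Set.finite_range a)
  have hsol_iff : ∀ c, (∀ j, inner ℝ (a j) c = y j) ↔ c - cs ∈ Wᗮ := fun c => by
    simp only [W, Submodule.mem_orthogonal_span_range_iff, inner_sub_right, hcs, sub_eq_zero]
  set cstar := x₀ - W.starProjection (x₀ - cs)
  have hcstar : ∀ j, inner ℝ (a j) cstar = y j := (hsol_iff cstar).mpr <| by
    simpa [cstar, sub_right_comm] using W.sub_starProjection_mem_orthogonal (x₀ - cs)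
  refine ⟨cstar, hcstar, ?_, fun hx₀ c hc => ?_⟩
  · set P := (kaczmarzSweep a y).linear
    have hv : x₀ - cstar ∈ W := by simpa [cstar] using W.starProjection_apply_mem (x₀ - cs)
    have hPW := (P.restrict (kaczmarzSweep_linear_mem_span a y)).tendsto_pow_apply_of_norm_apply_lt
      (fun v hv0 => norm_kaczmarzSweep_linear_lt a y v.2 (by simpa using hv0)) ⟨x₀ - cstar, hv⟩
    have hP : Tendsto (fun k => (P ^ k) (x₀ - cstar)) atTop (𝓝 0) :=
      ((continuous_subtype_val.tendsto 0).comp hPW).congr fun k => by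
        rw [Function.comp_apply, Module.End.pow_restrict]
        rfl
    simp_rw [AffineMap.iterate_apply_of_isFixedPt _ (kaczmarzSweep_apply_eq_self a y hcstar)]
    simpa using hP.add_const cstar
  · have hmem : cstar ∈ W := W.sub_mem hx₀ (W.starProjection_apply_mem _)
    have horth : c - cstar ∈ Wᗮ := by
      simpa using Wᗮ.sub_mem ((hsol_iff c).mp hc) ((hsol_iff cstar).mp hcstar)
    rw [← W.eq_starProjection_of_mem_orthogonal' hmem horth (add_sub_cancel cstar c).symm]
    exact W.norm_starProjection_apply_le c

end Kaczmarz

theorem toLp_foldl_eq_kaczmarzSweep_toLp {M N : ℕ} (a : Fin M → Fin N → ℝ) (y : Fin M → ℝ)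
    (u : Fin N → ℝ) :
    WithLp.toLp 2 (Fin.foldl M (fun v j => v - ((a j ⬝ᵥ v - y j) / (a j ⬝ᵥ a j)) • a j) u) =
      kaczmarzSweep (fun j => WithLp.toLp 2 (a j)) y (WithLp.toLp 2 u) := by
  rw [kaczmarzSweep_apply]
  refine Fin.foldl_hom (WithLp.toLp 2) (fun v j => ?_) u
  simp only [hyperplaneProj_apply, EuclideanSpace.inner_toLp_toLp, star_trivial,
    WithLp.toLp_sub, WithLp.toLp_smul, dotProduct_comm (a j)]

theorem statement18_general {M N : ℕ} (a : Fin M → Fin N → ℝ) (y : Fin M → ℝ)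
    (hsol : ∃ c : Fin N → ℝ, ∀ j, a j ⬝ᵥ c = y j)
    (c₀ : Fin N → ℝ) :
    ∃ cstar : Fin N → ℝ, (∀ j, a j ⬝ᵥ cstar = y j) ∧
      Tendsto (fun k : ℕ =>
          (fun u : Fin N → ℝ =>
            Fin.foldl M (fun v j => v - ((a j ⬝ᵥ v - y j) / (a j ⬝ᵥ a j)) • a j) u)^[k] c₀)
        atTop (nhds cstar) ∧
      (c₀ ∈ Submodule.span ℝ (Set.range a) →
        ∀ c : Fin N → ℝ, (∀ j, a j ⬝ᵥ c = y j) → cstar ⬝ᵥ cstar ≤ c ⬝ᵥ c) := by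
  obtain ⟨cs, hcs⟩ := hsol
  have hdot (u v : Fin N → ℝ) : u ⬝ᵥ v = inner ℝ (WithLp.toLp 2 u) (WithLp.toLp 2 v) := by
    simp [EuclideanSpace.inner_toLp_toLp, dotProduct_comm u]
  obtain ⟨cstar, hcstar, hlim, hmin⟩ := tendsto_iterate_kaczmarzSweep
    (fun j => WithLp.toLp 2 (a j)) y (cs := WithLp.toLp 2 cs) (by simpa [hdot] using hcs)
    (WithLp.toLp 2 c₀)
  have hconj := Function.Semiconj.iterate_right (f := WithLp.toLp 2)
    (toLp_foldl_eq_kaczmarzSweep_toLp a y)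
  refine ⟨WithLp.ofLp cstar, by simpa [hdot] using hcstar, ?_, fun hc₀ c hc => ?_⟩
  · refine ((PiLp.continuous_ofLp 2 _).tendsto cstar |>.comp hlim).congr fun k => ?_
    simp [← hconj k c₀]
  · have hc₀' := Submodule.mem_map_of_mem
      (f := (WithLp.linearEquiv 2 ℝ (Fin N → ℝ)).symm.toLinearMap) hc₀
    rw [Submodule.map_span, ← Set.range_comp] at hc₀'
    have h := hmin hc₀' (WithLp.toLp 2 c) (by simpa [hdot] using hc)
    rw [hdot, hdot, WithLp.toLp_ofLp, real_inner_self_eq_norm_sq, real_inner_self_eq_norm_sq]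
    gcongr

/-- Convergence of Kaczmarz's method: let `a_1, …, a_M` be the (nonzero) rows of a matrix
`A` and `y ∈ ℝ^M` with `Ac = y` solvable. With `Π_j u = u − ((a_jᵀu − y_j)/(a_jᵀa_j))·a_j`
and `Π = Π_M ⋯ Π_1`, the iterates `c^{(k)} = Π^k c^{(0)}` converge to a solution `c*` of
`Ac = y`; if `c^{(0)}` lies in the range of `Aᵀ` (the span of the rows), `c*` is the
minimal Euclidean norm solution. -/
theorem statement18 {M N : ℕ} (a : Fin M → Fin N → ℝ) (y : Fin M → ℝ)
    (ha : ∀ j, a j ≠ 0) (hsol : ∃ c : Fin N → ℝ, ∀ j, a j ⬝ᵥ c = y j)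
    (c₀ : Fin N → ℝ) :
    ∃ cstar : Fin N → ℝ, (∀ j, a j ⬝ᵥ cstar = y j) ∧
      Tendsto (fun k : ℕ =>
          (fun u : Fin N → ℝ =>
            Fin.foldl M (fun v j => v - ((a j ⬝ᵥ v - y j) / (a j ⬝ᵥ a j)) • a j) u)^[k] c₀)
        atTop (nhds cstar) ∧
      (c₀ ∈ Submodule.span ℝ (Set.range a) →
        ∀ c : Fin N → ℝ, (∀ j, a j ⬝ᵥ c = y j) → cstar ⬝ᵥ cstar ≤ c ⬝ᵥ c) :=
  statement18_general a y hsol c₀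
end

section
/- n-dimensional Fourier slice theorem for the X-ray transform: for f in the Schwartz space S(ℝⁿ), θ ∈ S^{n−1} and y ∈ θ^⊥, the (n−1)-dimensional Fourier transform of Pf(θ,·) on the hyperplane θ^⊥ satisfies F(Pf)(θ,y) = Ff(y), where Ff is the n-dimensional Fourier transform of f. -/
/-!
For a unit vector `θ`, the map `(x, t) ↦ x + t • θ` from `θ^⊥ × ℝ` to `ℝⁿ` is a linear isometry
(of the `L²` product), hence preserves Lebesgue measure, so Fubini turns the iterated integral
over `θ^⊥` and `ℝ` into the integral over `ℝⁿ`. Since `y ⊥ θ`, the phase `⟪x + t • θ, y⟫ = ⟪x, y⟫`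
does not depend on `t` and can be pulled into the inner integral.
-/

open MeasureTheory

section UnitDirection

variable {E : Type*} [NormedAddCommGroup E] [InnerProductSpace ℝ E]

noncomputable def LinearIsometryEquiv.orthogonalSpanSingletonProd (θ : E) (hθ : ‖θ‖ = 1) :
    WithLp 2 ((ℝ ∙ θ)ᗮ × ℝ) ≃ₗᵢ[ℝ] E :=
  (LinearIsometryEquiv.withLpProdComm 2 ℝ _ _).trans <|
    (LinearIsometryEquiv.withLpProdCongr (p := 2) (.toSpanUnitSingleton θ hθ) (.refl ℝ _)).trans
      (ℝ ∙ θ).orthogonalDecomposition.symm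

@[simp]
theorem LinearIsometryEquiv.orthogonalSpanSingletonProd_toLp {θ : E} (hθ : ‖θ‖ = 1)
    (x : (ℝ ∙ θ)ᗮ) (t : ℝ) :
    orthogonalSpanSingletonProd θ hθ (WithLp.toLp 2 (x, t)) = x + t • θ := by
  simp [orthogonalSpanSingletonProd, add_comm]

variable [FiniteDimensional ℝ E] [MeasurableSpace E] [BorelSpace E]
  {F : Type*} [NormedAddCommGroup F] [NormedSpace ℝ F]

theorem integral_orthogonal_integral_add_smul {θ : E} (hθ : ‖θ‖ = 1) {g : E → F}
    (hg : Integrable g) :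
    ∫ x : (ℝ ∙ θ)ᗮ, ∫ t : ℝ, g (x + t • θ) = ∫ z, g z := by
  set L := LinearIsometryEquiv.orthogonalSpanSingletonProd θ hθ
  have hL : MeasurePreserving (fun p : (ℝ ∙ θ)ᗮ × ℝ => L (WithLp.toLp 2 p)) :=
    L.measurePreserving.comp (WithLp.volume_preserving_toLp _ _)
  have hemb : MeasurableEmbedding (fun p : (ℝ ∙ θ)ᗮ × ℝ => L (WithLp.toLp 2 p)) :=
    L.toMeasurableEquiv.measurableEmbedding.comp (MeasurableEquiv.toLp 2 _).measurableEmbedding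
  have hgL : Integrable (fun p : (ℝ ∙ θ)ᗮ × ℝ => g (L (WithLp.toLp 2 p))) :=
    (hL.integrable_comp_emb hemb).2 hg
  calc ∫ x : (ℝ ∙ θ)ᗮ, ∫ t : ℝ, g (x + t • θ)
      = ∫ p : (ℝ ∙ θ)ᗮ × ℝ, g (L (WithLp.toLp 2 p)) := by
        rw [Measure.volume_eq_prod, integral_prod _ hgL]
        simp [L]
    _ = ∫ z, g z := hL.integral_comp hemb g

end UnitDirection

/-- n-dimensional Fourier slice theorem for the X-ray transform: for `f` Schwartz on `ℝⁿ`,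
`θ` a unit vector and `y ∈ θ^⊥`, the `(n−1)`-dimensional Fourier transform of `Pf(θ,·)`
on the hyperplane `θ^⊥` satisfies `F(Pf)(θ,y) = Ff(y)`, where
`Pf(θ,x) = ∫ℝ f(x + tθ) dt`. -/
theorem statement19 {n : ℕ} (f : SchwartzMap (EuclideanSpace ℝ (Fin n)) ℂ)
    (θ : EuclideanSpace ℝ (Fin n)) (hθ : ‖θ‖ = 1)
    (y : EuclideanSpace ℝ (Fin n)) (hy : y ∈ (ℝ ∙ θ)ᗮ) :
    (∫ x : (ℝ ∙ θ)ᗮ,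
        (∫ t : ℝ, f ((x : EuclideanSpace ℝ (Fin n)) + t • θ)) *
          Complex.exp (-Complex.I *
            ((inner ℝ (x : EuclideanSpace ℝ (Fin n)) y : ℝ) : ℂ))) =
      ∫ z : EuclideanSpace ℝ (Fin n),
        f z * Complex.exp (-Complex.I * ((inner ℝ z y : ℝ) : ℂ)) := by
  have hint : Integrable fun z => f z * Complex.exp (-Complex.I * ((inner ℝ z y : ℝ) : ℂ)) := by
    refine (f.integrable.bdd_mul (c := 1) (by fun_prop) (.of_forall fun z => ?_)).congr
      (.of_forall fun z => mul_comm _ _)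
    simp [Complex.norm_exp]
  have hθy : inner ℝ θ y = 0 := Submodule.mem_orthogonal_singleton_iff_inner_right.1 hy
  rw [← integral_orthogonal_integral_add_smul hθ hint]
  refine integral_congr_ae (.of_forall fun x => ?_)
  simp only [inner_add_left, real_inner_smul_left, hθy, mul_zero, add_zero]
  exact (integral_mul_const _ _).symm
end
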